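/- arXiv:2509.23642 — 3 statements merged into one kernel-verified Lean document; each statement's English description precedes it below -/
import Mathlib

section
/- Let k ≥ 2 be an integer and 0 < α < π/4. With β = arctan(tan^k α), the quantity E(α) = (cos^{2(k-1)}α sin^{2(k+1)}α + sin^{2(k-1)}α cos^{2(k+1)}α) / (cos^{2k}α + sin^{2k}α)² satisfies lim_{α→0⁺} E(α)/α^{2(k-1)} = 1; equivalently E(α)/β^{2(1-1/k)} → 1 as α → 0⁺. -/
open Real Filter Set

noncomputable section

/-- Leading-order infidelity factor of the transversal injection output:
E(α) = (cos^{2(k-1)}α sin^{2(k+1)}α + sin^{2(k-1)}α cos^{2(k+1)}α) / (cos^{2k}α + sin^{2k}α)². -/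
def Efactor (k : ℕ) (α : ℝ) : ℝ :=
  (Real.cos α ^ (2*(k-1)) * Real.sin α ^ (2*(k+1))
      + Real.sin α ^ (2*(k-1)) * Real.cos α ^ (2*(k+1)))
    / (Real.cos α ^ (2*k) + Real.sin α ^ (2*k)) ^ 2

/-!
Factoring `sin^{2(k-1)} α` out of the numerator leaves a function continuous at `0` with value
`1`, so `E(α) ~ sin^{2(k-1)} α ~ α^{2(k-1)}`. For the second limit, `β = arctan(tan^k α) ~ α^k`,
hence `β^{2(1-1/k)} ~ α^{2(k-1)}`.
-/

open scoped Topology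

lemma tendsto_div_self_of_hasDerivAt {f : ℝ → ℝ} (hf : HasDerivAt f 1 0) (h0 : f 0 = 0) :
    Tendsto (fun x => f x / x) (𝓝[≠] 0) (𝓝 1) := by
  rw [hasDerivAt_iff_tendsto_slope_zero] at hf
  simpa [h0, div_eq_inv_mul] using hf

lemma tendsto_sin_div_self : Tendsto (fun x => sin x / x) (𝓝[≠] 0) (𝓝 1) :=
  tendsto_div_self_of_hasDerivAt (by simpa using hasDerivAt_sin 0) sin_zero

lemma tendsto_tan_div_self : Tendsto (fun x => tan x / x) (𝓝[≠] 0) (𝓝 1) :=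
  tendsto_div_self_of_hasDerivAt (by simpa using hasDerivAt_tan (x := 0) (by simp)) tan_zero

lemma tendsto_arctan_div_self : Tendsto (fun x => arctan x / x) (𝓝[≠] 0) (𝓝 1) :=
  tendsto_div_self_of_hasDerivAt (by simpa using hasDerivAt_arctan 0) arctan_zero

def EfactorCofactor (k : ℕ) (α : ℝ) : ℝ :=
  (cos α ^ (2*(k-1)) * sin α ^ 4 + cos α ^ (2*(k+1)))
    / (cos α ^ (2*k) + sin α ^ (2*k)) ^ 2

lemma Efactor_eq_sin_pow_mul_cofactor {k : ℕ} (hk : 1 ≤ k) (α : ℝ) :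
    Efactor k α = sin α ^ (2*(k-1)) * EfactorCofactor k α := by
  have hsin : sin α ^ (2*(k+1)) = sin α ^ (2*(k-1)) * sin α ^ 4 := by
    rw [← pow_add]; congr 1; omega
  rw [Efactor, EfactorCofactor, hsin, mul_div_assoc']
  ring

lemma tendsto_EfactorCofactor {k : ℕ} (hk : 1 ≤ k) :
    Tendsto (EfactorCofactor k) (𝓝 0) (𝓝 1) := by
  have h2k : 2*k ≠ 0 := by omega
  have hcont : ContinuousAt (EfactorCofactor k) 0 :=
    ContinuousAt.div (by fun_prop) (by fun_prop) (by simp [zero_pow h2k])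
  simpa [EfactorCofactor, zero_pow h2k] using hcont.tendsto

lemma tendsto_Efactor_div_pow {k : ℕ} (hk : 1 ≤ k) :
    Tendsto (fun α => Efactor k α / α ^ (2*(k-1))) (𝓝[≠] 0) (𝓝 1) := by
  have hlim := (tendsto_sin_div_self.pow (2*(k-1))).mul
    ((tendsto_EfactorCofactor hk).mono_left nhdsWithin_le_nhds)
  rw [one_pow, one_mul] at hlim
  refine hlim.congr fun α => ?_
  rw [Efactor_eq_sin_pow_mul_cofactor hk, div_pow, mul_div_right_comm]

lemma tendsto_pow_div_arctan_tan_pow {k : ℕ} (hk : k ≠ 0) :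
    Tendsto (fun α => α ^ k / arctan (tan α ^ k)) (𝓝[≠] 0) (𝓝 1) := by
  have htan_ne : ∀ᶠ α in 𝓝[≠] 0, tan α ^ k ≠ 0 := by
    filter_upwards [tendsto_tan_div_self.eventually (lt_mem_nhds one_pos)] with α hα
    refine pow_ne_zero k fun htan => ?_
    simp [htan] at hα
  have htan_pow : Tendsto (fun α => tan α ^ k) (𝓝[≠] 0) (𝓝[≠] 0) := by
    refine tendsto_nhdsWithin_iff.2 ⟨?_, htan_ne⟩
    have hcont : ContinuousAt (fun α => tan α ^ k) 0 := (continuousAt_tan.2 (by simp)).pow k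
    simpa [zero_pow hk] using hcont.tendsto.mono_left nhdsWithin_le_nhds
  have hlim := ((tendsto_tan_div_self.inv₀ one_ne_zero).pow k).mul
    ((tendsto_arctan_div_self.comp htan_pow).inv₀ one_ne_zero)
  rw [inv_one, one_pow, one_mul] at hlim
  refine hlim.congr' ?_
  filter_upwards [htan_ne] with α hα
  simp only [Function.comp_apply, inv_div, div_pow]
  field_simp

lemma pow_div_rpow_two_mul_one_sub_inv {a b : ℝ} (ha : 0 ≤ a) (hb : 0 ≤ b) {k : ℕ} (hk : 1 ≤ k) :
    (a ^ k / b) ^ ((2:ℝ) * (1 - 1/(k:ℝ))) = a ^ (2*(k-1)) / b ^ ((2:ℝ) * (1 - 1/(k:ℝ))) := by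
  have hexp : (k:ℝ) * (2 * (1 - 1/(k:ℝ))) = ((2*(k-1) : ℕ) : ℝ) := by
    have hk0 : (k:ℝ) ≠ 0 := by positivity
    push_cast [Nat.cast_sub hk]
    field_simp
  rw [div_rpow (pow_nonneg ha k) hb, ← rpow_natCast a k, ← rpow_mul ha, hexp, rpow_natCast]

lemma tendsto_Efactor_div_arctan_tan_pow_rpow {k : ℕ} (hk : 1 ≤ k) :
    Tendsto (fun α => Efactor k α / arctan (tan α ^ k) ^ ((2:ℝ) * (1 - 1/(k:ℝ))))
      (𝓝[>] 0) (𝓝 1) := by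
  have hpunct : 𝓝[>] (0:ℝ) ≤ 𝓝[≠] 0 := nhdsWithin_mono _ fun _ hα => ne_of_gt hα
  have hratio := ((tendsto_pow_div_arctan_tan_pow (Nat.one_le_iff_ne_zero.mp hk)).mono_left
    hpunct).rpow_const (p := (2:ℝ) * (1 - 1/(k:ℝ))) (Or.inl one_ne_zero)
  have hlim := ((tendsto_Efactor_div_pow hk).mono_left hpunct).mul hratio
  rw [one_rpow, one_mul] at hlim
  refine hlim.congr' ?_
  filter_upwards [Ioo_mem_nhdsGT (by positivity : (0:ℝ) < π / 2)] with α ⟨hα0, hαπ⟩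
  have hβ : 0 ≤ arctan (tan α ^ k) :=
    arctan_nonneg.2 (pow_nonneg (tan_pos_of_pos_of_lt_pi_div_two hα0 hαπ).le k)
  have hαpow : α ^ (2*(k-1)) ≠ 0 := by positivity
  rw [pow_div_rpow_two_mul_one_sub_inv hα0.le hβ hk]
  field_simp

/-- E(α)/α^{2(k-1)} → 1 as α → 0⁺, and equivalently, with β = arctan(tan^k α),
E(α)/β^{2(1-1/k)} → 1 as α → 0⁺. -/
theorem infidelity_factor_scaling (k : ℕ) (hk : 2 ≤ k) :
    Tendsto (fun α : ℝ => Efactor k α / α ^ (2*(k-1)))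
      (nhdsWithin 0 (Set.Ioo 0 (Real.pi/4))) (nhds 1) ∧
    Tendsto (fun α : ℝ =>
        Efactor k α / (Real.arctan (Real.tan α ^ k)) ^ ((2:ℝ) * (1 - 1/(k:ℝ))))
      (nhdsWithin 0 (Set.Ioo 0 (Real.pi/4))) (nhds 1) := by
  have hk1 : 1 ≤ k := by omega
  have hIoo : 𝓝[Ioo 0 (π/4)] (0:ℝ) ≤ 𝓝[>] 0 := nhdsWithin_mono _ Ioo_subset_Ioi_self
  exact ⟨(tendsto_Efactor_div_pow hk1).mono_left
      (hIoo.trans (nhdsWithin_mono _ fun _ hα => ne_of_gt hα)),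
    (tendsto_Efactor_div_arctan_tan_pow_rpow hk1).mono_left hIoo⟩

end
end

section
/- Define the two-qubit gate-teleportation channels on 4×4 density matrices: G(ρ) = Π₊ U ρ U† Π₊ + R_z(2θ)₁ Π₋ U ρ U† Π₋ R_z(2θ)₁† and G'(ρ) = R_z(2θ)₁ Π₊ U ρ U† Π₊ R_z(2θ)₁† + Π₋ U ρ U† Π₋, where U = CNOT (control qubit 1, target qubit 2), Π± = (I ⊗ (I ± Z))/2, and R_z(2θ)₁ acts on qubit 1. Then for any single-qubit density matrix ρ_in and |θ⟩ = cos θ|+⟩ + i sin θ|−⟩: (1/2)[G(ρ_in ⊗ Z|θ⟩⟨θ|) + G'(ρ_in ⊗ X Z|θ⟩⟨θ| X)] = 0, i.e., the contributions of the off-diagonal term |θ^⊥⟩⟨θ| cancel exactly under equal-probability randomization between G and G'. -/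
open Matrix Kronecker ComplexOrder

noncomputable section

/-- The state |+⟩. -/
def plus : Fin 2 → ℂ := ![1/Real.sqrt 2, 1/Real.sqrt 2]

/-- The state |−⟩. -/
def minus : Fin 2 → ℂ := ![1/Real.sqrt 2, -(1/Real.sqrt 2)]

/-- The rotation state |θ⟩ = cos θ |+⟩ + i sin θ |−⟩. -/
def rotState (θ : ℝ) : Fin 2 → ℂ :=
  (Real.cos θ : ℂ) • plus + (Complex.I * Real.sin θ) • minus

/-- The Pauli X matrix. -/
def PauliX : Matrix (Fin 2) (Fin 2) ℂ := !![0, 1; 1, 0]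

/-- The Pauli Z matrix. -/
def PauliZ : Matrix (Fin 2) (Fin 2) ℂ := !![1, 0; 0, -1]

/-- R_z(φ) = cos φ · I + i sin φ · Z. -/
def Rz (φ : ℝ) : Matrix (Fin 2) (Fin 2) ℂ :=
  (Real.cos φ : ℂ) • (1 : Matrix (Fin 2) (Fin 2) ℂ) + (Complex.I * Real.sin φ) • PauliZ

/-- CNOT with control qubit 1 and target qubit 2: |c,t⟩ ↦ |c, t⊕c⟩. -/
def CNOT : Matrix (Fin 2 × Fin 2) (Fin 2 × Fin 2) ℂ :=
  fun p q => if p.1 = q.1 ∧ p.2 = q.2 + q.1 then 1 else 0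

/-- Π₊ = I ⊗ (I + Z)/2. -/
def Pip : Matrix (Fin 2 × Fin 2) (Fin 2 × Fin 2) ℂ :=
  (1 : Matrix (Fin 2) (Fin 2) ℂ) ⊗ₖ ((1/2 : ℂ) • ((1 : Matrix (Fin 2) (Fin 2) ℂ) + PauliZ))

/-- Π₋ = I ⊗ (I − Z)/2. -/
def Pim : Matrix (Fin 2 × Fin 2) (Fin 2 × Fin 2) ℂ :=
  (1 : Matrix (Fin 2) (Fin 2) ℂ) ⊗ₖ ((1/2 : ℂ) • ((1 : Matrix (Fin 2) (Fin 2) ℂ) - PauliZ))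

/-- R_z(2θ) on qubit 1. -/
def Rz1 (θ : ℝ) : Matrix (Fin 2 × Fin 2) (Fin 2 × Fin 2) ℂ :=
  Rz (2*θ) ⊗ₖ (1 : Matrix (Fin 2) (Fin 2) ℂ)

/-- The gate-teleportation channel
G(ρ) = Π₊ U ρ U† Π₊ + R_z(2θ)₁ Π₋ U ρ U† Π₋ R_z(2θ)₁†. -/
def Gtel (θ : ℝ) (ρ : Matrix (Fin 2 × Fin 2) (Fin 2 × Fin 2) ℂ) :
    Matrix (Fin 2 × Fin 2) (Fin 2 × Fin 2) ℂ :=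
  Pip * (CNOT * ρ * CNOTᴴ) * Pip + Rz1 θ * (Pim * (CNOT * ρ * CNOTᴴ) * Pim) * (Rz1 θ)ᴴ

/-- The flipped-feedback gate-teleportation channel
G'(ρ) = R_z(2θ)₁ Π₊ U ρ U† Π₊ R_z(2θ)₁† + Π₋ U ρ U† Π₋. -/
def Gtel' (θ : ℝ) (ρ : Matrix (Fin 2 × Fin 2) (Fin 2 × Fin 2) ℂ) :
    Matrix (Fin 2 × Fin 2) (Fin 2 × Fin 2) ℂ :=
  Rz1 θ * (Pip * (CNOT * ρ * CNOTᴴ) * Pip) * (Rz1 θ)ᴴ + Pim * (CNOT * ρ * CNOTᴴ) * Pim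

/-! After the CNOT, the projector `Π₊` leaves the Hadamard product `ρ_in ⊙ τ` of the input with
the ancilla `τ` on qubit 1, and `Π₋` leaves `ρ_in ⊙ XτX`. Flipping the feedback and replacing `τ`
by `XτX` swaps the two branches, so the randomized sum is `(ρ_in ⊙ σ + R (ρ_in ⊙ XσX) R†) ⊗ I`
with `R = R_z(2θ)`. As `R` is diagonal, `R (ρ_in ⊙ M) R† = ρ_in ⊙ R M R†`; and `R X |θ⟩ = |θ⟩`
together with `XZ = -ZX` gives `R XσX R† = -σ` for `σ = Z|θ⟩⟨θ|`. -/

open Complex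

theorem Matrix.mul_vecMulVec_star_mul_conjTranspose {m n α : Type*} [Fintype n] [Semiring α]
    [StarRing α] (M : Matrix m n α) (u v : n → α) :
    M * vecMulVec u (star v) * Mᴴ = vecMulVec (M *ᵥ u) (star (M *ᵥ v)) := by
  rw [mul_vecMulVec, vecMulVec_mul, star_mulVec]

theorem Matrix.diagonal_mul_hadamard_mul_diagonal {n α : Type*} [Fintype n] [DecidableEq n]
    [CommSemiring α] (d e : n → α) (A B : Matrix n n α) :
    diagonal d * (A ⊙ B) * diagonal e = A ⊙ (diagonal d * B * diagonal e) := by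
  ext i j
  simp only [mul_diagonal, diagonal_mul, hadamard_apply]
  ring

theorem PauliX_conjTranspose : PauliXᴴ = PauliX := by
  ext i j; fin_cases i <;> fin_cases j <;> simp [PauliX]

theorem PauliX_mul_PauliX : PauliX * PauliX = 1 := by
  ext i j; fin_cases i <;> fin_cases j <;> simp [PauliX]

theorem PauliX_mul_PauliZ : PauliX * PauliZ = -(PauliZ * PauliX) := by
  ext i j; fin_cases i <;> fin_cases j <;> simp [PauliX, PauliZ]

theorem PauliX_mul_mul_PauliX_apply (τ : Matrix (Fin 2) (Fin 2) ℂ) (a c : Fin 2) :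
    (PauliX * τ * PauliX) a c = τ (a + 1) (c + 1) := by
  fin_cases a <;> fin_cases c <;> simp [PauliX, mul_apply, Fin.sum_univ_two, vecMul, dotProduct]

theorem PauliX_mul_PauliX_mul_mul_PauliX_mul_PauliX (τ : Matrix (Fin 2) (Fin 2) ℂ) :
    PauliX * (PauliX * τ * PauliX) * PauliX = τ := by
  rw [← mul_assoc, ← mul_assoc, PauliX_mul_PauliX, one_mul, mul_assoc, PauliX_mul_PauliX, mul_one]

theorem Rz_mul_PauliZ (φ : ℝ) : Rz φ * PauliZ = PauliZ * Rz φ := by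
  simp [Rz, add_mul, mul_add]

theorem Rz_eq_diagonal (φ : ℝ) : Rz φ = diagonal ![exp (φ * I), exp (-(φ * I))] := by
  ext i j
  fin_cases i <;> fin_cases j <;>
    simp [Rz, PauliZ, exp_mul_I, ← neg_mul, cos_neg, sin_neg]
  all_goals ring

theorem Rz_mul_hadamard_mul_conjTranspose (φ : ℝ) (A B : Matrix (Fin 2) (Fin 2) ℂ) :
    Rz φ * (A ⊙ B) * (Rz φ)ᴴ = A ⊙ (Rz φ * B * (Rz φ)ᴴ) := by
  rw [Rz_eq_diagonal, diagonal_conjTranspose, diagonal_mul_hadamard_mul_diagonal]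

theorem rotState_eq (θ : ℝ) :
    rotState θ = (Real.sqrt 2 : ℂ)⁻¹ • ![exp (θ * I), exp (-(θ * I))] := by
  ext i
  fin_cases i <;>
    simp [rotState, plus, minus, exp_mul_I, ← neg_mul, cos_neg, sin_neg]
  all_goals ring

theorem Rz_two_mul_mulVec_PauliX_mulVec_rotState (θ : ℝ) :
    Rz (2 * θ) *ᵥ (PauliX *ᵥ rotState θ) = rotState θ := by
  have h₀ : exp (2 * θ * I) * exp (-(θ * I)) = exp (θ * I) := by
    rw [← exp_add]; ring_nf
  have h₁ : exp (-(2 * θ * I)) * exp (θ * I) = exp (-(θ * I)) := by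
    rw [← exp_add]; ring_nf
  rw [Rz_eq_diagonal, rotState_eq]
  ext i
  fin_cases i
  · simp [PauliX]
    linear_combination (Real.sqrt 2 : ℂ)⁻¹ * h₀
  · simp [PauliX]
    linear_combination (Real.sqrt 2 : ℂ)⁻¹ * h₁

theorem Rz_two_mul_conj_PauliX_conj_PauliZ_mul_proj_rotState (θ : ℝ) :
    Rz (2 * θ) * (PauliX * (PauliZ * vecMulVec (rotState θ) (star (rotState θ))) * PauliX)
      * (Rz (2 * θ))ᴴ = -(PauliZ * vecMulVec (rotState θ) (star (rotState θ))) := by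
  set R := Rz (2 * θ) * PauliX
  have hR : R *ᵥ rotState θ = rotState θ := by
    rw [← mulVec_mulVec, Rz_two_mul_mulVec_PauliX_mulVec_rotState]
  calc Rz (2 * θ) * (PauliX * (PauliZ * vecMulVec (rotState θ) (star (rotState θ))) * PauliX)
        * (Rz (2 * θ))ᴴ
      = Rz (2 * θ) * (PauliX * PauliZ) * vecMulVec (rotState θ) (star (rotState θ)) * Rᴴ := by
        rw [conjTranspose_mul, PauliX_conjTranspose]; simp only [mul_assoc]
    _ = -(PauliZ * (R * vecMulVec (rotState θ) (star (rotState θ)) * Rᴴ)) := by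
        rw [PauliX_mul_PauliZ, mul_neg, ← mul_assoc, Rz_mul_PauliZ]
        simp only [R, mul_assoc, neg_mul]
    _ = -(PauliZ * vecMulVec (rotState θ) (star (rotState θ))) := by
        rw [mul_vecMulVec_star_mul_conjTranspose, hR]

theorem CNOT_apply (p q : Fin 2 × Fin 2) : CNOT p q = if q = (p.1, p.2 + p.1) then 1 else 0 := by
  unfold CNOT
  congr 1
  revert p q
  decide

theorem CNOT_mul_mul_conjTranspose_apply (M : Matrix (Fin 2 × Fin 2) (Fin 2 × Fin 2) ℂ)
    (p q : Fin 2 × Fin 2) : (CNOT * M * CNOTᴴ) p q = M (p.1, p.2 + p.1) (q.1, q.2 + q.1) := by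
  simp [mul_apply, conjTranspose_apply, CNOT_apply]

theorem Pip_eq_diagonal : Pip = diagonal fun p => if p.2 = 0 then 1 else 0 := by
  ext ⟨a, b⟩ ⟨c, d⟩
  fin_cases b <;> fin_cases d <;> norm_num [Pip, PauliZ, one_apply, diagonal_apply]

theorem Pim_eq_diagonal : Pim = diagonal fun p => if p.2 = 1 then 1 else 0 := by
  ext ⟨a, b⟩ ⟨c, d⟩
  fin_cases b <;> fin_cases d <;> norm_num [Pim, PauliZ, one_apply, diagonal_apply]

theorem Pip_mul_CNOT_conj_kronecker_mul_Pip (ρ τ : Matrix (Fin 2) (Fin 2) ℂ) :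
    Pip * (CNOT * (ρ ⊗ₖ τ) * CNOTᴴ) * Pip = (ρ ⊙ τ) ⊗ₖ single 0 0 1 := by
  ext ⟨a, b⟩ ⟨c, d⟩
  simp only [Pip_eq_diagonal, diagonal_mul, mul_diagonal, CNOT_mul_mul_conjTranspose_apply,
    kronecker_apply, hadamard_apply, single_apply]
  fin_cases b <;> fin_cases d <;> simp

theorem Pim_mul_CNOT_conj_kronecker_mul_Pim (ρ τ : Matrix (Fin 2) (Fin 2) ℂ) :
    Pim * (CNOT * (ρ ⊗ₖ τ) * CNOTᴴ) * Pim = (ρ ⊙ (PauliX * τ * PauliX)) ⊗ₖ single 1 1 1 := by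
  ext ⟨a, b⟩ ⟨c, d⟩
  simp only [Pim_eq_diagonal, diagonal_mul, mul_diagonal, CNOT_mul_mul_conjTranspose_apply,
    kronecker_apply, hadamard_apply, single_apply, PauliX_mul_mul_PauliX_apply]
  fin_cases b <;> fin_cases d <;> simp [add_comm]

theorem Rz1_mul_kronecker_mul_conjTranspose (θ : ℝ) (M N : Matrix (Fin 2) (Fin 2) ℂ) :
    Rz1 θ * (M ⊗ₖ N) * (Rz1 θ)ᴴ = (Rz (2 * θ) * M * (Rz (2 * θ))ᴴ) ⊗ₖ N := by
  rw [Rz1, conjTranspose_kronecker, conjTranspose_one, ← mul_kronecker_mul, ← mul_kronecker_mul,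
    one_mul, mul_one]

theorem Gtel_kronecker (θ : ℝ) (ρ τ : Matrix (Fin 2) (Fin 2) ℂ) :
    Gtel θ (ρ ⊗ₖ τ) = (ρ ⊙ τ) ⊗ₖ single 0 0 1
      + (Rz (2 * θ) * (ρ ⊙ (PauliX * τ * PauliX)) * (Rz (2 * θ))ᴴ) ⊗ₖ single 1 1 1 := by
  rw [Gtel, Pip_mul_CNOT_conj_kronecker_mul_Pip, Pim_mul_CNOT_conj_kronecker_mul_Pim,
    Rz1_mul_kronecker_mul_conjTranspose]

theorem Gtel'_kronecker (θ : ℝ) (ρ τ : Matrix (Fin 2) (Fin 2) ℂ) :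
    Gtel' θ (ρ ⊗ₖ τ) = (Rz (2 * θ) * (ρ ⊙ τ) * (Rz (2 * θ))ᴴ) ⊗ₖ single 0 0 1
      + (ρ ⊙ (PauliX * τ * PauliX)) ⊗ₖ single 1 1 1 := by
  rw [Gtel', Pip_mul_CNOT_conj_kronecker_mul_Pip, Pim_mul_CNOT_conj_kronecker_mul_Pim,
    Rz1_mul_kronecker_mul_conjTranspose]

theorem randomization_cancels_offdiagonal_general (θ : ℝ) (ρin : Matrix (Fin 2) (Fin 2) ℂ) :
    (1/2 : ℂ) •
      (Gtel θ (ρin ⊗ₖ (PauliZ * vecMulVec (rotState θ) (star (rotState θ))))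
        + Gtel' θ (ρin ⊗ₖ
            (PauliX * (PauliZ * vecMulVec (rotState θ) (star (rotState θ))) * PauliX)))
      = 0 := by
  set σ := PauliZ * vecMulVec (rotState θ) (star (rotState θ))
  have hcancel : ρin ⊙ σ + Rz (2 * θ) * (ρin ⊙ (PauliX * σ * PauliX)) * (Rz (2 * θ))ᴴ = 0 := by
    rw [Rz_mul_hadamard_mul_conjTranspose, Rz_two_mul_conj_PauliX_conj_PauliZ_mul_proj_rotState,
      ← hadamard_add, add_neg_cancel, hadamard_zero]
  have hsum : Gtel θ (ρin ⊗ₖ σ) + Gtel' θ (ρin ⊗ₖ (PauliX * σ * PauliX))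
      = (ρin ⊙ σ + Rz (2 * θ) * (ρin ⊙ (PauliX * σ * PauliX)) * (Rz (2 * θ))ᴴ)
        ⊗ₖ (single 0 0 1 + single 1 1 1) := by
    rw [Gtel_kronecker, Gtel'_kronecker, PauliX_mul_PauliX_mul_mul_PauliX_mul_PauliX,
      kronecker_add, add_kronecker, add_kronecker]
    abel
  rw [hsum, hcancel, zero_kronecker, smul_zero]

/-- Under equal-probability randomization between G and G', the contributions of
the off-diagonal ancilla term |θ^⊥⟩⟨θ| = Z|θ⟩⟨θ| cancel exactly:
(1/2)[G(ρ_in ⊗ Z|θ⟩⟨θ|) + G'(ρ_in ⊗ X Z|θ⟩⟨θ| X)] = 0. -/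
theorem randomization_cancels_offdiagonal (θ : ℝ) (ρin : Matrix (Fin 2) (Fin 2) ℂ)
    (hPSD : ρin.PosSemidef) (htr : ρin.trace = 1) :
    (1/2 : ℂ) •
      (Gtel θ (ρin ⊗ₖ (PauliZ * vecMulVec (rotState θ) (star (rotState θ))))
        + Gtel' θ (ρin ⊗ₖ
            (PauliX * (PauliZ * vecMulVec (rotState θ) (star (rotState θ))) * PauliX)))
      = 0 :=
  randomization_cancels_offdiagonal_general θ ρin

end
end

section
/- Let k ≥ 2, 0 < α < π/4, β = arctan(tan^k α), and 0 ≤ ε ≤ 1/4. Consider the output state ρ_out ∝ (1−ε)^k p_s^{(0)} |ψ₀⟩⟨ψ₀| + k ε (1−ε)^{k−1} p_s^{(1)} |ψ₁⟩⟨ψ₁| + k(k−1) ε(1−ε)^{k−1} p_s^{(1)} |ψ₁⟩⟨ψ₁| (normalized), where p_s^{(0)} = cos^{2k}α + sin^{2k}α, p_s^{(1)} = cos^{2k−2}α sin²α + sin^{2k−2}α cos²α, |ψ₀⟩ ∝ cos^k α|+⟩ + i sin^k α|−⟩, and |ψ₁⟩ ∝ cos^{k−1}α sin α|+⟩ + i^{0}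 sin^{k−1}α cos α|−⟩ (all normalized). Then the infidelity ε_L = ⟨ψ₀^⊥|ρ_out|ψ₀^⊥⟩ satisfies ε_L ≤ k² ε p_s^{(1)} |⟨ψ₁|ψ₀^⊥⟩|² / ((1−ε)^k p_s^{(0)}). -/
/-!
Since `ψ0perp` is orthogonal to `ψ0`, the error-free term of `ρout` contributes nothing to the
infidelity; the two error terms share the projector onto `ψ1` and add up to the weight
`k ε (1-ε)^(k-1) p₁ + k (k-1) ε (1-ε)^(k-1) p₁ = k² ε (1-ε)^(k-1) p₁`. The infidelity is therefore
`D |⟨ψ₁|ψ₀^⊥⟩|² / ((1-ε)^k p₀ + D)` with `D` that weight, and the bound follows by dropping `D`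
from the normalization and using `(1-ε)^(k-1) ≤ 1`.
-/

open Matrix

noncomputable section

/-- p_s⁽⁰⁾ = cos^{2k}α + sin^{2k}α. -/
def p0 (k : ℕ) (α : ℝ) : ℝ := Real.cos α ^ (2*k) + Real.sin α ^ (2*k)

/-- p_s⁽¹⁾ = cos^{2k−2}α sin²α + sin^{2k−2}α cos²α. -/
def p1 (k : ℕ) (α : ℝ) : ℝ :=
  Real.cos α ^ (2*k-2) * Real.sin α ^ 2 + Real.sin α ^ (2*k-2) * Real.cos α ^ 2

/-- The ideal output |ψ₀⟩ = (1/√p₀)(cos^k α|+⟩ + i sin^k α|−⟩). -/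
def ψ0 (k : ℕ) (α : ℝ) : Fin 2 → ℂ :=
  ((Real.sqrt (p0 k α) : ℂ))⁻¹ •
    (((Real.cos α : ℂ) ^ k) • plus + (Complex.I * (Real.sin α : ℂ) ^ k) • minus)

/-- The state orthogonal to |ψ₀⟩: |ψ₀^⊥⟩ = (1/√p₀)(i sin^k α|+⟩ + cos^k α|−⟩). -/
def ψ0perp (k : ℕ) (α : ℝ) : Fin 2 → ℂ :=
  ((Real.sqrt (p0 k α) : ℂ))⁻¹ •
    ((Complex.I * (Real.sin α : ℂ) ^ k) • plus + ((Real.cos α : ℂ) ^ k) • minus)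

/-- The single-error state |ψ₁⟩ = (1/√p₁)(cos^{k−1}α sin α|+⟩ + sin^{k−1}α cos α|−⟩). -/
def ψ1 (k : ℕ) (α : ℝ) : Fin 2 → ℂ :=
  ((Real.sqrt (p1 k α) : ℂ))⁻¹ •
    (((Real.cos α : ℂ) ^ (k-1) * (Real.sin α : ℂ)) • plus
      + ((Real.sin α : ℂ) ^ (k-1) * (Real.cos α : ℂ)) • minus)

/-- The normalized transversal-injection output state
ρ_out ∝ (1−ε)^k p₀|ψ₀⟩⟨ψ₀| + kε(1−ε)^{k−1}p₁|ψ₁⟩⟨ψ₁| + k(k−1)ε(1−ε)^{k−1}p₁|ψ₁⟩⟨ψ₁|. -/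
def ρout (k : ℕ) (α ε : ℝ) : Matrix (Fin 2) (Fin 2) ℂ :=
  ((((1-ε)^k * p0 k α + (k:ℝ)*ε*(1-ε)^(k-1) * p1 k α
      + (k:ℝ)*((k:ℝ)-1)*ε*(1-ε)^(k-1) * p1 k α : ℝ) : ℂ))⁻¹ •
    ((((1-ε)^k * p0 k α : ℝ) : ℂ) • vecMulVec (ψ0 k α) (star (ψ0 k α))
      + (((k:ℝ)*ε*(1-ε)^(k-1) * p1 k α : ℝ) : ℂ) • vecMulVec (ψ1 k α) (star (ψ1 k α))
      + (((k:ℝ)*((k:ℝ)-1)*ε*(1-ε)^(k-1) * p1 k α : ℝ) : ℂ)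
          • vecMulVec (ψ1 k α) (star (ψ1 k α)))

theorem star_dotProduct_vecMulVec_mulVec {𝕜 n : Type*} [RCLike 𝕜] [Fintype n] (v w : n → 𝕜) :
    star v ⬝ᵥ vecMulVec w (star w) *ᵥ v = ((‖star w ⬝ᵥ v‖ ^ 2 : ℝ) : 𝕜) := by
  rw [vecMulVec_mulVec, op_smul_eq_smul, dotProduct_smul, smul_eq_mul, star_dotProduct,
    RCLike.star_def, RCLike.conj_mul, RCLike.ofReal_pow, RCLike.norm_conj]

theorem p0_pos (k : ℕ) (α : ℝ) : 0 < p0 k α := by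
  have hcs : Real.cos α ≠ 0 ∨ Real.sin α ≠ 0 := by
    by_contra! h
    simpa [h.1, h.2] using Real.sin_sq_add_cos_sq α
  rcases hcs with hc | hs
  · exact add_pos_of_pos_of_nonneg ((even_two_mul k).pow_pos hc) ((even_two_mul k).pow_nonneg _)
  · exact add_pos_of_nonneg_of_pos ((even_two_mul k).pow_nonneg _) ((even_two_mul k).pow_pos hs)

theorem p1_nonneg (k : ℕ) (α : ℝ) : 0 ≤ p1 k α := by
  have hev : Even (2 * k - 2) := ⟨k - 1, by omega⟩
  unfold p1
  have := hev.pow_nonneg (Real.cos α)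
  have := hev.pow_nonneg (Real.sin α)
  positivity

theorem star_ψ0_dotProduct_ψ0perp (k : ℕ) (α : ℝ) : star (ψ0 k α) ⬝ᵥ ψ0perp k α = 0 := by
  simp only [dotProduct, ψ0, Complex.ofReal_cos, plus, one_div, smul_cons, smul_eq_mul, smul_empty,
    Complex.ofReal_sin, minus, mul_neg, add_cons, head_cons, tail_cons, empty_add_empty, Pi.star_apply,
    RCLike.star_def, ψ0perp, Pi.smul_apply, Fin.sum_univ_two, Fin.isValue, cons_val_zero, map_mul,
    map_inv₀, Complex.conj_ofReal, map_add, map_pow, ← Complex.cos_conj, Complex.conj_I,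
    ← Complex.sin_conj, neg_mul, cons_val_one, cons_val_fin_one, map_neg, neg_neg]
  ring

theorem re_star_ψ0perp_dotProduct_ρout_mulVec (k : ℕ) (α ε : ℝ) :
    (star (ψ0perp k α) ⬝ᵥ ρout k α ε *ᵥ ψ0perp k α).re =
      (k:ℝ)^2 * ε * (1-ε)^(k-1) * p1 k α * ‖star (ψ1 k α) ⬝ᵥ ψ0perp k α‖ ^ 2 /
        ((1-ε)^k * p0 k α + (k:ℝ)^2 * ε * (1-ε)^(k-1) * p1 k α) := by
  simp only [ρout, smul_mulVec, add_mulVec, dotProduct_smul, dotProduct_add, smul_eq_mul,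
    star_dotProduct_vecMulVec_mulVec, star_ψ0_dotProduct_ψ0perp]
  simp only [RCLike.ofReal_eq_complex_ofReal, norm_zero, ← Complex.ofReal_inv,
    Complex.re_ofReal_mul, Complex.add_re, Complex.ofReal_re]
  ring

theorem theorem1_core_inequality_general (k : ℕ) (α ε : ℝ)
    (hε0 : 0 ≤ ε) (hε1 : ε ≤ 1/4) :
    (star (ψ0perp k α) ⬝ᵥ (ρout k α ε).mulVec (ψ0perp k α)).re
      ≤ (k:ℝ)^2 * ε * p1 k α * ‖star (ψ1 k α) ⬝ᵥ ψ0perp k α‖ ^ 2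
          / ((1-ε)^k * p0 k α) := by
  rw [re_star_ψ0perp_dotProduct_ρout_mulVec]
  have hε : 0 < 1 - ε := by linarith
  have hp1 := p1_nonneg k α
  have hA : 0 < (1-ε)^k * p0 k α := mul_pos (pow_pos hε k) (p0_pos k α)
  calc _ ≤ (k:ℝ)^2 * ε * (1-ε)^(k-1) * p1 k α * ‖star (ψ1 k α) ⬝ᵥ ψ0perp k α‖ ^ 2
          / ((1-ε)^k * p0 k α) := by
        gcongr
        exact le_add_of_nonneg_right (by positivity)
    _ ≤ (k:ℝ)^2 * ε * 1 * p1 k α * ‖star (ψ1 k α) ⬝ᵥ ψ0perp k α‖ ^ 2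
          / ((1-ε)^k * p0 k α) := by
        gcongr
        exact pow_le_one₀ hε.le (by linarith)
    _ = _ := by rw [mul_one]

/-- Core inequality of Theorem 1: the infidelity ε_L = ⟨ψ₀^⊥|ρ_out|ψ₀^⊥⟩ of the
transversal-injection output satisfies
ε_L ≤ k² ε p_s⁽¹⁾ |⟨ψ₁|ψ₀^⊥⟩|² / ((1−ε)^k p_s⁽⁰⁾). -/
theorem theorem1_core_inequality (k : ℕ) (hk : 2 ≤ k) (α ε : ℝ)
    (hα0 : 0 < α) (hα1 : α < Real.pi/4) (hε0 : 0 ≤ ε) (hε1 : ε ≤ 1/4) :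
    (star (ψ0perp k α) ⬝ᵥ (ρout k α ε).mulVec (ψ0perp k α)).re
      ≤ (k:ℝ)^2 * ε * p1 k α * ‖star (ψ1 k α) ⬝ᵥ ψ0perp k α‖ ^ 2
          / ((1-ε)^k * p0 k α) :=
  theorem1_core_inequality_general k α ε hε0 hε1

end
end
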